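/- arXiv:1002.2868 — 7 statements merged into one kernel-verified Lean document; each statement's English description precedes it below -/
import Mathlib

section
/- If a transition system specification is s-complete, then it has a unique supported model, and this unique supported model coincides with the set of all closed positive formulae that have a supported proof. -/
/-!
A Transition System Specification (TSS) over a type `T` of closed terms and a type `L` of
labels.  Since the notions of supported model and supported proof only ever refer to *closed
instances* of the deduction rules (a deduction rule together with a closing substitution
applied to it), we represent a TSS by the set of closed instances of its deduction rules.
-/

/-- Closed formulae: the positive formula `t →[l] t'` and the negative formula `t ↛[l]`. -/
inductive Formula (T L : Type) : Type
  | pos : T → L → T → Formula T L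
  | neg : T → L → Formula T L

namespace Formula

/-- `t →[l] t'` and `t ↛[l]` contradict each other (and nothing else). -/
def contradicts {T L : Type} : Formula T L → Formula T L → Prop
  | pos t l _, neg u m => t = u ∧ l = m
  | neg t l, pos u m _ => t = u ∧ l = m
  | _, _ => False

end Formula

/-- A closed instance of a deduction rule: a set of premises together with a positive
conclusion `src →[lbl] tgt`. -/
structure Rule (T L : Type) where
  prem : Set (Formula T L)
  src : T
  lbl : L
  tgt : T

/-- A transition system specification, given by the set of closed instances of its
deduction rules. -/
structure TSS (T L : Type) where
  rules : Set (Rule T L)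

/-- A transition relation (a set of closed positive formulae, represented as triples `(t, l, t')`)
is *consistent* with a set `Ψ` of closed formulae when every positive formula of `Ψ` belongs to
the relation, and no formula of the relation contradicts a negative formula of `Ψ`. -/
def Consistent {T L : Type} (Tr : Set (T × L × T)) (Ψ : Set (Formula T L)) : Prop :=
  (∀ t l t', Formula.pos t l t' ∈ Ψ → (t, l, t') ∈ Tr) ∧
  (∀ t l, Formula.neg t l ∈ Ψ → ∀ t', (t, l, t') ∉ Tr)

/-- `Tr` is a supported model of the TSS `S` for the set `P` of closed terms and the set `L'`
of labels:
(1) every transition in `Tr` is the conclusion of a closed instance of a deduction rule whose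
    premises are consistent with `Tr`, and
(2) whenever a closed instance of a deduction rule has conclusion `p →[l] p'` with `p ∈ P` and
    `l ∈ L'` and premises consistent with `Tr`, then `(p, l, p') ∈ Tr`. -/
def SupportedModelFor {T L : Type} (S : TSS T L) (P : Set T) (L' : Set L)
    (Tr : Set (T × L × T)) : Prop :=
  (∀ q l q', (q, l, q') ∈ Tr →
      ∃ r ∈ S.rules, r.src = q ∧ r.lbl = l ∧ r.tgt = q' ∧ Consistent Tr r.prem) ∧
  (∀ p ∈ P, ∀ l ∈ L', ∀ p',
      (∃ r ∈ S.rules, r.src = p ∧ r.lbl = l ∧ r.tgt = p' ∧ Consistent Tr r.prem) →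
      (p, l, p') ∈ Tr)

/-- `Tr` is a supported model of the TSS `S` (for all closed terms and all labels). -/
def SupportedModel {T L : Type} (S : TSS T L) (Tr : Set (T × L × T)) : Prop :=
  SupportedModelFor S Set.univ Set.univ Tr

/-- The TSS `S` provides a supported proof of the closed formula `φ`.  This inductive
definition captures precisely the well-founded upwardly branching proof trees: a node labelled
with a positive formula must, together with the set of formulae labelling the nodes above it,
form a closed instance of a deduction rule; a node labelled with a negative formula has a set
`K` of formulae above it such that every closed instance of a deduction rule whose conclusion
contradicts the formula has a premise contradicted by some formula of `K`. -/
inductive SupportedProof {T L : Type} (S : TSS T L) : Formula T L → Prop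
  | pos (r : Rule T L) (hr : r ∈ S.rules)
      (hprem : ∀ ψ ∈ r.prem, SupportedProof S ψ) :
      SupportedProof S (Formula.pos r.src r.lbl r.tgt)
  | neg (t : T) (l : L) (K : Set (Formula T L))
      (hK : ∀ ψ ∈ K, SupportedProof S ψ)
      (hrules : ∀ r ∈ S.rules, r.src = t → r.lbl = l →
          ∃ χ ∈ K, ∃ χ' ∈ r.prem, Formula.contradicts χ χ') :
      SupportedProof S (Formula.neg t l)

/-- A TSS is s-complete when for every closed positive formula, either the formula itself or
the (unique) formula contradicting it has a supported proof. -/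
def SComplete {T L : Type} (S : TSS T L) : Prop :=
  ∀ t l t', SupportedProof S (Formula.pos t l t') ∨ SupportedProof S (Formula.neg t l)

/-!
Every supported proof is sound for every supported model, so a supported model contains every
provable transition and, by s-completeness, nothing else.
Conversely, two supported proofs never prove contradicting formulae, so under s-completeness a
negative formula is provable exactly when it holds in the relation of provable transitions.
Hence a set of premises is consistent with that relation exactly when all its members are
provable, which makes the relation a supported model.
-/

namespace Formula

variable {T L : Type}

def Holds (Tr : Set (T × L × T)) : Formula T L → Prop
  | pos t l t' => (t, l, t') ∈ Tr
  | neg t l => ∀ t', (t, l, t') ∉ Tr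

theorem contradicts.symm {φ ψ : Formula T L} (h : φ.contradicts ψ) : ψ.contradicts φ := by
  cases φ <;> cases ψ <;> simp_all [contradicts]

theorem not_holds_of_contradicts {Tr : Set (T × L × T)} {φ ψ : Formula T L}
    (hφ : φ.Holds Tr) (h : φ.contradicts ψ) : ¬ ψ.Holds Tr := by
  cases φ <;> cases ψ <;> obtain ⟨rfl, rfl⟩ := h
  · exact fun hψ => hψ _ hφ
  · exact fun hψ => hφ _ hψ

end Formula

open Formula

variable {T L : Type} {S : TSS T L}

theorem consistent_iff_forall_holds {Tr : Set (T × L × T)} {Ψ : Set (Formula T L)} :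
    Consistent Tr Ψ ↔ ∀ φ ∈ Ψ, φ.Holds Tr :=
  ⟨fun ⟨hpos, hneg⟩ φ hφ => by cases φ <;> simp_all [Holds],
    fun h => ⟨fun t l t' hφ => h _ hφ, fun t l hφ => h _ hφ⟩⟩

namespace SupportedProof

theorem holds {Tr : Set (T × L × T)} (hTr : SupportedModel S Tr) {φ : Formula T L}
    (hφ : SupportedProof S φ) : φ.Holds Tr := by
  induction hφ with
  | pos r hr _ ih =>
    exact hTr.2 _ trivial _ trivial _ ⟨r, hr, rfl, rfl, rfl, consistent_iff_forall_holds.2 ih⟩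
  | neg t l K _ hrules ih =>
    intro t' htr
    obtain ⟨r, hr, hsrc, hlbl, -, hcons⟩ := hTr.1 t l t' htr
    obtain ⟨χ, hχ, χ', hχ', hcontra⟩ := hrules r hr hsrc hlbl
    exact not_holds_of_contradicts (ih χ hχ) hcontra (consistent_iff_forall_holds.1 hcons χ' hχ')

theorem not_contradicts {φ ψ : Formula T L} (hφ : SupportedProof S φ)
    (hψ : SupportedProof S ψ) : ¬ φ.contradicts ψ := by
  induction hφ generalizing ψ with
  | pos r hr _ ih =>
    cases hψ with
    | pos => exact id
    | neg _ _ K hK hrules =>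
      rintro ⟨rfl, rfl⟩
      obtain ⟨χ, hχ, χ', hχ', hcontra⟩ := hrules r hr rfl rfl
      exact ih χ' hχ' (hK χ hχ) hcontra.symm
  | neg t l K _ hrules ih =>
    cases hψ with
    | neg => exact id
    | pos r hr hprem =>
      rintro ⟨rfl, rfl⟩
      obtain ⟨χ, hχ, χ', hχ', hcontra⟩ := hrules r hr rfl rfl
      exact ih χ hχ (hprem χ' hχ') hcontra

end SupportedProof

def provableTransitions (S : TSS T L) : Set (T × L × T) :=
  {x | SupportedProof S (Formula.pos x.1 x.2.1 x.2.2)}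

namespace SComplete

theorem holds_provableTransitions_iff (h : SComplete S) {φ : Formula T L} :
    φ.Holds (provableTransitions S) ↔ SupportedProof S φ := by
  cases φ with
  | pos t l t' => rfl
  | neg t l =>
    refine ⟨fun hneg => (h t l t).resolve_left (hneg t), fun hφ t' hpos => ?_⟩
    exact SupportedProof.not_contradicts hpos hφ ⟨rfl, rfl⟩

theorem supportedModel_provableTransitions (h : SComplete S) :
    SupportedModel S (provableTransitions S) := by
  have consistent_iff {Ψ : Set (Formula T L)} :
      Consistent (provableTransitions S) Ψ ↔ ∀ φ ∈ Ψ, SupportedProof S φ := by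
    simp only [consistent_iff_forall_holds, h.holds_provableTransitions_iff]
  constructor
  · rintro q l q' (⟨r, hr, hprem⟩ : SupportedProof S _)
    exact ⟨r, hr, rfl, rfl, rfl, consistent_iff.2 hprem⟩
  · rintro p - l - p' ⟨r, hr, rfl, rfl, rfl, hcons⟩
    exact SupportedProof.pos r hr (consistent_iff.1 hcons)

theorem eq_provableTransitions (h : SComplete S) {Tr : Set (T × L × T)}
    (hTr : SupportedModel S Tr) : Tr = provableTransitions S := by
  ext ⟨t, l, t'⟩
  refine ⟨fun htr => ?_, fun hprov => hprov.holds hTr⟩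
  exact (h t l t').resolve_right fun hneg => hneg.holds hTr t' htr

end SComplete

/-- If a TSS is s-complete, then it has a unique supported model, and this
unique supported model coincides with the set of all closed positive formulae that have a
supported proof. -/
theorem sComplete_imp_unique_supported_model {T L : Type} (S : TSS T L) (h : SComplete S) :
    (∃! Tr : Set (T × L × T), SupportedModel S Tr) ∧
    (∀ Tr : Set (T × L × T), SupportedModel S Tr →
      Tr = {x : T × L × T | SupportedProof S (Formula.pos x.1 x.2.1 x.2.2)}) :=
  ⟨⟨provableTransitions S, h.supportedModel_provableTransitions,
      fun _ hTr => h.eq_provableTransitions hTr⟩,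
    fun _ hTr => h.eq_provableTransitions hTr⟩
end

section
/- In the TSS consisting of the single deduction rule r1 = ({p →s p}, p →s p) over the signature with the single constant p and the single label s, neither the formula p →s p nor the formula p ↛s has a supported proof; hence this TSS is not s-complete. -/
/-- The deduction rule `r1 = ({p →s p}, p →s p)` over the signature with the single constant
`p` (the unique element of `Unit`) and the single label `s` (the unique element of `Unit`). -/
def r1 : Rule Unit Unit := ⟨{Formula.pos () () ()}, (), (), ()⟩

/-- The deduction rule `r2 = ({p ↛s}, p →s p)`. -/
def r2 : Rule Unit Unit := ⟨{Formula.neg () ()}, (), (), ()⟩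

/- In a TSS in which every rule has a premise and every pair `(t, l)` heads some rule, a proof
tree could never reach a leaf: a positive node needs a proof of a premise, and a negative node
needs a proof of a formula contradicting a premise of the rule heading it. -/
theorem not_supportedProof_of_prem_nonempty {T L : Type} {S : TSS T L}
    (hprem : ∀ r ∈ S.rules, r.prem.Nonempty)
    (hhead : ∀ t l, ∃ r ∈ S.rules, r.src = t ∧ r.lbl = l) (φ : Formula T L) :
    ¬ SupportedProof S φ := by
  intro h
  induction h with
  | pos r hr _ ih =>
    obtain ⟨ψ, hψ⟩ := hprem r hr
    exact ih ψ hψ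
  | neg t l K _ hcontra ih =>
    obtain ⟨r, hr, rfl, rfl⟩ := hhead t l
    obtain ⟨χ, hχ, -⟩ := hcontra r hr rfl rfl
    exact ih χ hχ

theorem not_supportedProof_r1 (φ : Formula Unit Unit) :
    ¬ SupportedProof (⟨{r1}⟩ : TSS Unit Unit) φ :=
  not_supportedProof_of_prem_nonempty
    (fun _ hr => hr ▸ Set.singleton_nonempty _) (fun _ _ => ⟨r1, Set.mem_singleton r1, rfl, rfl⟩) φ

/-- In the TSS consisting of the single rule `r1`, neither `p →s p` nor
`p ↛s` has a supported proof; hence this TSS is not s-complete. -/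
theorem tss_r1_not_sComplete :
    ¬ SupportedProof (⟨{r1}⟩ : TSS Unit Unit) (Formula.pos () () ()) ∧
    ¬ SupportedProof (⟨{r1}⟩ : TSS Unit Unit) (Formula.neg () ()) ∧
    ¬ SComplete (⟨{r1}⟩ : TSS Unit Unit) := by
  refine ⟨not_supportedProof_r1 _, not_supportedProof_r1 _, fun h => ?_⟩
  rcases h () () () with h | h <;> exact not_supportedProof_r1 _ h
end

section
/- In the TSS consisting of the single deduction rule r2 = ({p ↛s}, p →s p) over the signature with the single constant p and the single label s, neither the formula p →s p nor the formula p ↛s has a supported proof; hence this TSS is not s-complete. -/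
/-!
Proving `p →s p` needs a proof of the premise `p ↛s`, and proving `p ↛s` needs, to refute the
only rule `r2`, a proof of a formula contradicting its premise `p ↛s`, i.e. of `p →s p` again;
so no well-founded proof tree exists. In general, if every rule concluding a positive member of
`B` has a premise in `B`, and every negative member of `B` is challenged by a rule whose premises
are contradicted only by members of `B`, then no member of `B` has a supported proof; for `{r2}`,
`B` can be the set of all formulae.
-/

def IsUnsupportedSet {T L : Type} (S : TSS T L) (B : Set (Formula T L)) : Prop :=
  (∀ r ∈ S.rules, Formula.pos r.src r.lbl r.tgt ∈ B → ∃ ψ ∈ r.prem, ψ ∈ B) ∧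
  (∀ t l, Formula.neg t l ∈ B → ∃ r ∈ S.rules, r.src = t ∧ r.lbl = l ∧
      ∀ χ, ∀ χ' ∈ r.prem, Formula.contradicts χ χ' → χ ∈ B)

theorem SupportedProof.not_mem_of_isUnsupportedSet {T L : Type} {S : TSS T L}
    {B : Set (Formula T L)} (hB : IsUnsupportedSet S B) {φ : Formula T L}
    (h : SupportedProof S φ) : φ ∉ B := by
  induction h with
  | pos r hr _ ih =>
    intro hφ
    obtain ⟨ψ, hψ, hψB⟩ := hB.1 r hr hφ
    exact ih ψ hψ hψB
  | neg t l K _ hrules ih =>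
    intro hφ
    obtain ⟨r, hr, rfl, rfl, hcontra⟩ := hB.2 _ _ hφ
    obtain ⟨χ, hχ, χ', hχ', hcon⟩ := hrules r hr rfl rfl
    exact ih χ hχ (hcontra χ χ' hχ' hcon)

theorem not_sComplete_of_not_supportedProof {T L : Type} {S : TSS T L} {t t' : T} {l : L}
    (hpos : ¬ SupportedProof S (Formula.pos t l t')) (hneg : ¬ SupportedProof S (Formula.neg t l)) :
    ¬ SComplete S :=
  fun hS => (hS t l t').elim hpos hneg

theorem isUnsupportedSet_r2_univ : IsUnsupportedSet (⟨{r2}⟩ : TSS Unit Unit) Set.univ :=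
  ⟨fun _ hr _ => ⟨Formula.neg () (), by rw [hr]; rfl, trivial⟩,
    fun _ _ _ => ⟨r2, rfl, rfl, rfl, fun _ _ _ _ => trivial⟩⟩

theorem not_supportedProof_r2 (φ : Formula Unit Unit) :
    ¬ SupportedProof (⟨{r2}⟩ : TSS Unit Unit) φ :=
  fun h => h.not_mem_of_isUnsupportedSet isUnsupportedSet_r2_univ trivial

/-- In the TSS consisting of the single rule `r2`, neither `p →s p` nor
`p ↛s` has a supported proof; hence this TSS is not s-complete. -/
theorem tss_r2_not_sComplete :
    ¬ SupportedProof (⟨{r2}⟩ : TSS Unit Unit) (Formula.pos () () ()) ∧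
    ¬ SupportedProof (⟨{r2}⟩ : TSS Unit Unit) (Formula.neg () ()) ∧
    ¬ SComplete (⟨{r2}⟩ : TSS Unit Unit) := by
  have hpos := not_supportedProof_r2 (Formula.pos () () ())
  have hneg := not_supportedProof_r2 (Formula.neg () ())
  exact ⟨hpos, hneg, not_sComplete_of_not_supportedProof hpos hneg⟩
end

section
/- Let P1 be the Esterel program 'present s then emit s else 0' with context c = P1. In the Esterel TSS, P1 has at least two distinct supported models for P = subterms(P1) = {P1, emit s, 0} and the labels {⊨_{P1} s, ✓_{P1}, →_{P1,s}}: there is a supported model containing the emission predicate P1 ⊨_{P1} s and a supported model not containing it. Hence P1 is not logically coherent (it does not have a unique supported model). -/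
/-!
A fragment of Esterel and its TSS.  Closed programs are generated by
`p, q ::= 0 | emit x | present x then p else q | p ; q | p ∥ q` where `x` ranges over a type
`S` of signals (no input signals and no local-signal encapsulation, and the input evaluation
is empty throughout, so it is omitted).  The TSS is represented by the set of closed instances
of its deduction rules, all parameterized by a fixed closed context program `c`.
-/

/-- Esterel programs (the fragment without inputs, traps, loops, time and encapsulation). -/
inductive Prog (S : Type) : Type
  | nil : Prog S                             -- 0
  | emit : S → Prog S                        -- emit x
  | present : S → Prog S → Prog S → Prog S   -- present x then p else q
  | seq : Prog S → Prog S → Prog S           -- p ; q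
  | par : Prog S → Prog S → Prog S           -- p ∥ q

/-- The subterms of a program (the program itself together with the subterms of its
immediate components). -/
def Prog.subterms {S : Type} : Prog S → Set (Prog S)
  | .nil => {Prog.nil}
  | .emit x => {Prog.emit x}
  | .present x p q => insert (Prog.present x p q) (p.subterms ∪ q.subterms)
  | .seq p q => insert (Prog.seq p q) (p.subterms ∪ q.subterms)
  | .par p q => insert (Prog.par p q) (p.subterms ∪ q.subterms)

/-- Closed formulae of the Esterel TSS (for a fixed context, which is left implicit):
emission predicates `p ⊨ x`, termination predicates `p ✓`, transitions `p →x p'`, and their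
negations. -/
inductive EFormula (S : Type) : Type
  | emits : Prog S → S → EFormula S            -- p ⊨ x
  | nemits : Prog S → S → EFormula S           -- ¬(p ⊨ x)
  | term : Prog S → EFormula S                 -- p ✓
  | nterm : Prog S → EFormula S                -- ¬(p ✓)
  | trans : Prog S → S → Prog S → EFormula S   -- p →x p'
  | ntrans : Prog S → S → EFormula S           -- p ↛x

namespace EFormula

/-- Positive formulae. -/
def isPos {S : Type} : EFormula S → Prop
  | emits _ _ => True
  | term _ => True
  | trans _ _ _ => True
  | _ => False

/-- Each positive formula is contradicted by (exactly) its negation, and vice versa. -/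
def contradicts {S : Type} : EFormula S → EFormula S → Prop
  | emits p x, nemits q y => p = q ∧ x = y
  | nemits p x, emits q y => p = q ∧ x = y
  | term p, nterm q => p = q
  | nterm p, term q => p = q
  | trans p x _, ntrans q y => p = q ∧ x = y
  | ntrans p x, trans q y _ => p = q ∧ x = y
  | _, _ => False

end EFormula

/-- The labels of the Esterel TSS: `⊨ x`, `✓` and `→x`. -/
inductive ELabel (S : Type) : Type
  | emits : S → ELabel S
  | term : ELabel S
  | trans : S → ELabel S

/-- The source (program) of a formula. -/
def EFormula.src {S : Type} : EFormula S → Prog S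
  | .emits p _ => p
  | .nemits p _ => p
  | .term p => p
  | .nterm p => p
  | .trans p _ _ => p
  | .ntrans p _ => p

/-- The label of a formula. -/
def EFormula.lbl {S : Type} : EFormula S → ELabel S
  | .emits _ x => ELabel.emits x
  | .nemits _ x => ELabel.emits x
  | .term _ => ELabel.term
  | .nterm _ => ELabel.term
  | .trans _ x _ => ELabel.trans x
  | .ntrans _ x => ELabel.trans x

/-- The closed instances of the deduction rules of the Esterel TSS with context `c`:
`EsterelRule c K φ` holds when `(K, φ)` is a closed instance of a deduction rule
(with premises `K` and conclusion `φ`). -/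
inductive EsterelRule {S : Type} (c : Prog S) : Set (EFormula S) → EFormula S → Prop
  | e0 (x) : EsterelRule c ∅ (EFormula.emits (Prog.emit x) x)
  | s0 (p q x) : EsterelRule c {EFormula.emits p x} (EFormula.emits (Prog.seq p q) x)
  | s1 (p q x) : EsterelRule c {EFormula.term p, EFormula.emits q x}
      (EFormula.emits (Prog.seq p q) x)
  | s2 (p p' q x x') : EsterelRule c
      {EFormula.trans p x' p', EFormula.term p', EFormula.emits q x}
      (EFormula.emits (Prog.seq p q) x)
  | p0 (p q x) : EsterelRule c {EFormula.emits p x} (EFormula.emits (Prog.par p q) x)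
  | p1 (p q x) : EsterelRule c {EFormula.emits q x} (EFormula.emits (Prog.par p q) x)
  | f0 (s p q x) : EsterelRule c {EFormula.emits c s, EFormula.emits p x}
      (EFormula.emits (Prog.present s p q) x)
  | f1 (s p q x) : EsterelRule c {EFormula.nemits c s, EFormula.emits q x}
      (EFormula.emits (Prog.present s p q) x)
  | nil : EsterelRule c ∅ (EFormula.term Prog.nil)
  | em (x) : EsterelRule c ∅ (EFormula.trans (Prog.emit x) x Prog.nil)
  | seq0 (p p' q q' x x') : EsterelRule c
      {EFormula.trans p x p', EFormula.term p', EFormula.trans q x' q'}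
      (EFormula.trans (Prog.seq p q) x q')
  | seq1 (p p' q q' x x') : EsterelRule c
      {EFormula.trans p x p', EFormula.term p', EFormula.trans q x' q'}
      (EFormula.trans (Prog.seq p q) x' q')
  | seq2 (p q q' x) : EsterelRule c {EFormula.term p, EFormula.trans q x q'}
      (EFormula.trans (Prog.seq p q) x q')
  | seq3 (p p' q x) : EsterelRule c
      {EFormula.trans p x p', EFormula.term p', EFormula.term q}
      (EFormula.trans (Prog.seq p q) x p')
  | seq4 (p q) : EsterelRule c {EFormula.term p, EFormula.term q}
      (EFormula.term (Prog.seq p q))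
  | par0 (p p' q q' x x') : EsterelRule c
      {EFormula.trans p x p', EFormula.trans q x' q'}
      (EFormula.trans (Prog.par p q) x (Prog.par p' q'))
  | par1 (p p' q q' x x') : EsterelRule c
      {EFormula.trans p x p', EFormula.trans q x' q'}
      (EFormula.trans (Prog.par p q) x' (Prog.par p' q'))
  | par2 (p q q' x) : EsterelRule c {EFormula.term p, EFormula.trans q x q'}
      (EFormula.trans (Prog.par p q) x q')
  | par3 (p p' q x) : EsterelRule c {EFormula.trans p x p', EFormula.term q}
      (EFormula.trans (Prog.par p q) x p')
  | par4 (p q) : EsterelRule c {EFormula.term p, EFormula.term q}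
      (EFormula.term (Prog.par p q))
  | if0 (s p p' q x) : EsterelRule c {EFormula.emits c s, EFormula.trans p x p'}
      (EFormula.trans (Prog.present s p q) x p')
  | if1 (s p q q' x) : EsterelRule c {EFormula.nemits c s, EFormula.trans q x q'}
      (EFormula.trans (Prog.present s p q) x q')
  | if4 (s p q) : EsterelRule c {EFormula.emits c s, EFormula.term p}
      (EFormula.term (Prog.present s p q))
  | if5 (s p q) : EsterelRule c {EFormula.nemits c s, EFormula.term q}
      (EFormula.term (Prog.present s p q))

/-- A transition relation `T` (a set of positive closed formulae) is consistent with a set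
`Ψ` of closed formulae: every positive formula of `Ψ` belongs to `T`, and no formula of `T`
contradicts a negative formula of `Ψ`. -/
def EConsistent {S : Type} (T Ψ : Set (EFormula S)) : Prop :=
  (∀ φ ∈ Ψ, φ.isPos → φ ∈ T) ∧
  (∀ φ ∈ Ψ, ¬ φ.isPos → ∀ χ ∈ T, ¬ χ.contradicts φ)

/-- `T` is a supported model of the Esterel TSS with context `c`, for the set `P` of closed
terms and the set `L'` of labels: `T` is a transition relation (a set of positive formulae)
such that (1) every formula in `T` is the conclusion of a closed instance of a deduction rule
whose premises are consistent with `T`, and (2) for every closed instance of a deduction rule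
whose conclusion has its source in `P` and its label in `L'` and whose premises are consistent
with `T`, the conclusion belongs to `T`. -/
def ESupportedModel {S : Type} (c : Prog S) (P : Set (Prog S)) (L' : Set (ELabel S))
    (T : Set (EFormula S)) : Prop :=
  (∀ φ ∈ T, φ.isPos) ∧
  (∀ φ ∈ T, ∃ K, EsterelRule c K φ ∧ EConsistent T K) ∧
  (∀ K φ, EsterelRule c K φ → φ.src ∈ P → φ.lbl ∈ L' → EConsistent T K → φ ∈ T)

/-- The Esterel TSS with context `c` provides a supported proof of the closed formula `φ`.
This inductive definition captures precisely the well-founded upwardly branching proof trees: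
a node labelled with a positive formula must, together with the set of formulae labelling the
nodes above it, form a closed instance of a deduction rule; a node labelled with a negative
formula has a set `K` of formulae above it such that every closed instance of a deduction rule
whose conclusion contradicts the formula has a premise contradicted by some formula of `K`. -/
inductive ESupProof {S : Type} (c : Prog S) : EFormula S → Prop
  | pos (K : Set (EFormula S)) (φ : EFormula S) (hrule : EsterelRule c K φ)
      (hprem : ∀ ψ ∈ K, ESupProof c ψ) : ESupProof c φ
  | neg (φ : EFormula S) (hφ : ¬ φ.isPos) (K : Set (EFormula S))
      (hK : ∀ ψ ∈ K, ESupProof c ψ)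
      (hrules : ∀ K' ψ', EsterelRule c K' ψ' → ψ'.contradicts φ →
          ∃ χ ∈ K, ∃ χ' ∈ K', χ.contradicts χ') :
      ESupProof c φ

/-- The program `P1 = present s then emit s else 0`. -/
def P1 {S : Type} (s : S) : Prog S := Prog.present s (Prog.emit s) Prog.nil

/-- The labels `{⊨ s, ✓, →s}`. -/
def L1 {S : Type} (s : S) : Set (ELabel S) := {ELabel.emits s, ELabel.term, ELabel.trans s}

/-!
Whether `P1 = present s then emit s else 0` emits `s` depends on itself: guessing that it does
makes the `then` branch run, which emits `s`; guessing that it does not makes the `else`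
branch `0` run, which emits nothing. Both guesses are self-supporting, giving two supported
models that differ on `P1 ⊨ s`.
-/

namespace EFormula

variable {S : Type}

def HoldsIn (T : Set (EFormula S)) : EFormula S → Prop
  | nemits p x => emits p x ∉ T
  | nterm p => term p ∉ T
  | ntrans p x => ∀ p', trans p x p' ∉ T
  | φ => φ ∈ T

theorem contradicts_nemits {χ : EFormula S} {p x} :
    χ.contradicts (nemits p x) ↔ χ = emits p x := by
  cases χ <;> simp [contradicts, eq_comm]

theorem contradicts_nterm {χ : EFormula S} {p} : χ.contradicts (nterm p) ↔ χ = term p := by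
  cases χ <;> simp [contradicts, eq_comm]

theorem contradicts_ntrans {χ : EFormula S} {p x} :
    χ.contradicts (ntrans p x) ↔ ∃ p', χ = trans p x p' := by
  cases χ <;> simp [contradicts, eq_comm]

theorem holdsIn_iff {T : Set (EFormula S)} {φ : EFormula S} :
    φ.HoldsIn T ↔ (φ.isPos → φ ∈ T) ∧ (¬φ.isPos → ∀ χ ∈ T, ¬χ.contradicts φ) := by
  cases φ <;> simp [HoldsIn, isPos, contradicts_nemits, contradicts_nterm, contradicts_ntrans] <;>
    aesop

end EFormula

open EFormula

section

variable {S : Type}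

theorem eConsistent_iff {T K : Set (EFormula S)} :
    EConsistent T K ↔ ∀ φ ∈ K, φ.HoldsIn T := by
  simp only [EConsistent, holdsIn_iff, ← forall_and]

/-- `b` is the guess whether `P1 ⊨ s`; it decides which branch of `P1` runs. -/
def p1Model (s : S) (b : Bool) : Set (EFormula S) :=
  {emits (.emit s) s, trans (.emit s) s .nil, term .nil} ∪
    if b then {emits (P1 s) s, trans (P1 s) s .nil} else {term (P1 s)}

theorem emits_P1_mem_p1Model {s : S} {b : Bool} : emits (P1 s) s ∈ p1Model s b ↔ b = true := by
  cases b <;> simp [p1Model, P1]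

theorem subterms_P1 (s : S) : (P1 s).subterms = {P1 s, Prog.emit s, Prog.nil} := by
  ext p
  simp only [P1, Prog.subterms, Set.mem_insert_iff, Set.mem_union, Set.mem_singleton_iff]

theorem p1Model_closed (s : S) (b : Bool) {K : Set (EFormula S)} {φ : EFormula S}
    (hr : EsterelRule (P1 s) K φ) (hsrc : φ.src ∈ ({P1 s, Prog.emit s, Prog.nil} : Set (Prog S)))
    (hlbl : φ.lbl ∈ L1 s) (hK : ∀ ψ ∈ K, ψ.HoldsIn (p1Model s b)) : φ ∈ p1Model s b := by
  cases hr <;> cases b <;> simp_all [src, lbl, L1, P1, HoldsIn, p1Model]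

theorem p1Model_supported (s : S) (b : Bool) :
    ∀ φ ∈ p1Model s b, ∃ K, EsterelRule (P1 s) K φ ∧ ∀ ψ ∈ K, ψ.HoldsIn (p1Model s b) := by
  rintro φ (⟨rfl | rfl | rfl⟩ | hφ)
  · exact ⟨∅, .e0 s, by simp⟩
  · exact ⟨∅, .em s, by simp⟩
  · exact ⟨∅, .nil, by simp⟩
  cases b <;> simp only [Bool.false_eq_true, if_true, if_false, Set.mem_insert_iff,
    Set.mem_singleton_iff] at hφ
  case false =>
    subst hφ
    exact ⟨_, .if5 s (.emit s) .nil, by simp [HoldsIn, p1Model, P1]⟩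
  case true =>
    rcases hφ with rfl | rfl
    · exact ⟨_, .f0 s (.emit s) .nil s, by simp [HoldsIn, p1Model]⟩
    · exact ⟨_, .if0 s (.emit s) .nil .nil s, by simp [HoldsIn, p1Model]⟩

theorem p1Model_isSupportedModel (s : S) (b : Bool) :
    ESupportedModel (P1 s) (P1 s).subterms (L1 s) (p1Model s b) := by
  simp only [ESupportedModel, eConsistent_iff, subterms_P1]
  refine ⟨?_, p1Model_supported s b, fun _ _ => p1Model_closed s b⟩
  cases b <;> simp [p1Model, isPos]

end

/-- In the Esterel TSS with context `c = P1`, the program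
`P1 = present s then emit s else 0` has at least two distinct supported models for
`P = subterms(P1) = {P1, emit s, 0}` and the labels `{⊨ s, ✓, →s}`: one containing the
emission predicate `P1 ⊨ s` and one not containing it.  Hence `P1` is not logically coherent
(it does not have a unique supported model). -/
theorem P1_not_logically_coherent {S : Type} (s : S) :
    (P1 s).subterms = {P1 s, Prog.emit s, Prog.nil} ∧
    (∃ T, ESupportedModel (P1 s) (P1 s).subterms (L1 s) T ∧ EFormula.emits (P1 s) s ∈ T) ∧
    (∃ T, ESupportedModel (P1 s) (P1 s).subterms (L1 s) T ∧ EFormula.emits (P1 s) s ∉ T) ∧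
    ¬ ∃! T, ESupportedModel (P1 s) (P1 s).subterms (L1 s) T := by
  have hmodel := p1Model_isSupportedModel s
  have hmem : emits (P1 s) s ∈ p1Model s true := emits_P1_mem_p1Model.2 rfl
  have hnotMem : emits (P1 s) s ∉ p1Model s false := by simp [emits_P1_mem_p1Model]
  refine ⟨subterms_P1 s, ⟨_, hmodel true, hmem⟩, ⟨_, hmodel false, hnotMem⟩, fun huniq => ?_⟩
  exact ne_of_mem_of_not_mem' hmem hnotMem (huniq.unique (hmodel true) (hmodel false))
end

section
/- Let P2 be the Esterel program 'present s then 0 else emit s' with context c = P2. In the Esterel TSS, P2 has no supported model for P = subterms(P2) = {P2, emit s, 0} and the labels {⊨_{P2} s, ✓_{P2}, →_{P2,s}}. -/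
/-- The program `P2 = present s then 0 else emit s`. -/
def P2 {S : Type} (s : S) : Prog S := Prog.present s Prog.nil (Prog.emit s)

/-- The labels `{⊨ s, ✓, →s}`. -/
def L2 {S : Type} (s : S) : Set (ELabel S) := {ELabel.emits s, ELabel.term, ELabel.trans s}

/-!
In a supported model `T` with context `P2`, rules (f0) and (f1) force
`P2 ⊨ s ∈ T ↔ (P2 ⊨ s ∈ T ∧ 0 ⊨ s ∈ T) ∨ (P2 ⊨ s ∉ T ∧ emit s ⊨ s ∈ T)`.
No rule concludes `0 ⊨ s`, and (e0) puts `emit s ⊨ s` into `T`, so this collapses to the liar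
equation `P2 ⊨ s ∈ T ↔ P2 ⊨ s ∉ T`.
-/

theorem P2_subterms {S : Type} (s : S) :
    (P2 s).subterms = {P2 s, Prog.emit s, Prog.nil} := by
  ext p
  simp [P2, Prog.subterms]

section EConsistent

variable {S : Type} {T : Set (EFormula S)} {c p : Prog S} {s x : S}

theorem EConsistent.empty : EConsistent T (∅ : Set (EFormula S)) :=
  ⟨fun _ h => h.elim, fun _ h => h.elim⟩

theorem eConsistent_emits_emits :
    EConsistent T {EFormula.emits c s, EFormula.emits p x} ↔
      EFormula.emits c s ∈ T ∧ EFormula.emits p x ∈ T := by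
  constructor
  · rintro ⟨hpos, -⟩
    exact ⟨hpos _ (by simp) trivial, hpos _ (by simp) trivial⟩
  · rintro ⟨hc, hp⟩
    refine ⟨?_, ?_⟩
    · rintro φ (rfl | rfl) - <;> assumption
    · rintro φ (rfl | rfl) hφ <;> exact absurd trivial hφ

theorem eConsistent_nemits_emits :
    EConsistent T {EFormula.nemits c s, EFormula.emits p x} ↔
      EFormula.emits c s ∉ T ∧ EFormula.emits p x ∈ T := by
  constructor
  · rintro ⟨hpos, hneg⟩
    exact ⟨fun hc => hneg _ (.inl rfl) id _ hc ⟨rfl, rfl⟩, hpos _ (by simp) trivial⟩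
  · rintro ⟨hc, hp⟩
    refine ⟨?_, ?_⟩
    · rintro φ (rfl | rfl) hφ
      · exact hφ.elim
      · exact hp
    · rintro φ (rfl | rfl) hφ χ hχ hcon
      · cases χ <;> simp only [EFormula.contradicts] at hcon
        obtain ⟨rfl, rfl⟩ := hcon
        exact hc hχ
      · exact hφ trivial

end EConsistent

namespace ESupportedModel

variable {S : Type} {c p q : Prog S} {P : Set (Prog S)} {L' : Set (ELabel S)}
  {T : Set (EFormula S)} {s x : S}

theorem emits_nil_notMem (hT : ESupportedModel c P L' T) (x : S) :
    EFormula.emits Prog.nil x ∉ T := fun h => by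
  obtain ⟨K, hr, -⟩ := hT.2.1 _ h
  cases hr

theorem emits_emit_mem (hT : ESupportedModel c P L' T) (hP : Prog.emit x ∈ P)
    (hL : ELabel.emits x ∈ L') : EFormula.emits (Prog.emit x) x ∈ T :=
  hT.2.2 _ _ (.e0 x) hP hL EConsistent.empty

theorem emits_present_mem_iff (hT : ESupportedModel c P L' T) (hP : Prog.present s p q ∈ P)
    (hL : ELabel.emits x ∈ L') :
    EFormula.emits (Prog.present s p q) x ∈ T ↔
      EFormula.emits c s ∈ T ∧ EFormula.emits p x ∈ T ∨
        EFormula.emits c s ∉ T ∧ EFormula.emits q x ∈ T := by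
  constructor
  · intro h
    obtain ⟨K, hr, hK⟩ := hT.2.1 _ h
    cases hr with
    | f0 => exact .inl (eConsistent_emits_emits.1 hK)
    | f1 => exact .inr (eConsistent_nemits_emits.1 hK)
  · rintro (h | h)
    · exact hT.2.2 _ _ (.f0 s p q x) hP hL (eConsistent_emits_emits.2 h)
    · exact hT.2.2 _ _ (.f1 s p q x) hP hL (eConsistent_nemits_emits.2 h)

end ESupportedModel

/-- In the Esterel TSS with context `c = P2`, the program
`P2 = present s then 0 else emit s` has no supported model for
`P = subterms(P2) = {P2, emit s, 0}` and the labels `{⊨ s, ✓, →s}`. -/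
theorem P2_no_supported_model {S : Type} (s : S) :
    (P2 s).subterms = {P2 s, Prog.emit s, Prog.nil} ∧
    ¬ ∃ T, ESupportedModel (P2 s) (P2 s).subterms (L2 s) T := by
  refine ⟨P2_subterms s, ?_⟩
  rintro ⟨T, hT⟩
  have hL : ELabel.emits s ∈ L2 s := .inl rfl
  have hemit := hT.emits_emit_mem (by simp [P2_subterms]) hL
  have hliar := hT.emits_present_mem_iff (s := s) (p := Prog.nil) (q := Prog.emit s)
    (by rw [P2_subterms]; exact .inl rfl) hL
  simp only [hT.emits_nil_notMem, hemit, and_false, and_true, false_or] at hliar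
  exact iff_not_self hliar
end

section
/- Let P3 be the Esterel program 'present s then emit s else emit s' with context c = P3. In the Esterel TSS, neither the emission predicate P3 ⊨_{P3} s nor its negation ¬(P3 ⊨_{P3} s) has a supported proof; hence P3 is not constructive. -/
/-- The program `P3 = present s then emit s else emit s`. -/
def P3 {S : Type} (s : S) : Prog S := Prog.present s (Prog.emit s) (Prog.emit s)

/-!
The only rules concluding `P3 ⊨ s` are `f0` and `f1`, whose premises `P3 ⊨ s` resp. `¬(P3 ⊨ s)`
are again the two formulae in question. A supported proof of `¬(P3 ⊨ s)` must refute a premise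
of the instance `P3 ⊨ s, emit s ⊨ s ⊢ P3 ⊨ s` of `f0`, i.e. prove `¬(P3 ⊨ s)` or `¬(emit s ⊨ s)`,
and the latter is impossible because `emit s ⊨ s` is an axiom. So every supported proof of either
formula contains a strictly smaller one, which well-foundedness rules out.
-/

namespace EFormula

variable {S : Type}

theorem not_isPos_of_contradicts {ψ φ : EFormula S} (hψ : ψ.isPos) (h : ψ.contradicts φ) :
    ¬ φ.isPos := by
  cases ψ <;> cases φ <;> simp_all [isPos, contradicts]

theorem eq_nemits_of_contradicts_emits {χ : EFormula S} {p : Prog S} {x : S}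
    (h : χ.contradicts (emits p x)) : χ = nemits p x := by
  cases χ <;> simp_all [contradicts]

end EFormula

theorem EsterelRule.isPos {S : Type} {c : Prog S} {K : Set (EFormula S)} {φ : EFormula S}
    (h : EsterelRule c K φ) : φ.isPos := by
  cases h <;> trivial

namespace ESupProof

variable {S : Type}

theorem not_of_contradicts_axiom {c : Prog S} {ψ φ : EFormula S} (hax : EsterelRule c ∅ ψ)
    (hcon : ψ.contradicts φ) : ¬ ESupProof c φ := by
  rintro (⟨K, φ, hrule⟩ | ⟨φ, -, K, -, hrules⟩)
  · exact EFormula.not_isPos_of_contradicts hax.isPos hcon hrule.isPos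
  · obtain ⟨-, -, χ', hχ', -⟩ := hrules ∅ ψ hax hcon
    exact hχ'

theorem not_nemits_emit (c : Prog S) (s : S) :
    ¬ ESupProof c (EFormula.nemits (Prog.emit s) s) :=
  not_of_contradicts_axiom (EsterelRule.e0 s) ⟨rfl, rfl⟩

theorem ne_emits_P3_and_ne_nemits_P3 (s : S) {φ : EFormula S} (h : ESupProof (P3 s) φ) :
    φ ≠ EFormula.emits (P3 s) s ∧ φ ≠ EFormula.nemits (P3 s) s := by
  induction h with
  | pos K φ hrule _ ih =>
    refine ⟨?_, fun hφ => by subst hφ; exact hrule.isPos⟩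
    rintro rfl
    cases hrule with
    | f0 => exact (ih _ (Set.mem_insert _ _)).1 rfl
    | f1 => exact (ih _ (Set.mem_insert _ _)).2 rfl
  | neg φ hφ K hK hrules ih =>
    refine ⟨fun heq => hφ (heq ▸ trivial), ?_⟩
    rintro rfl
    obtain ⟨χ, hχ, χ', hχ', hcon⟩ :=
      hrules _ _ (EsterelRule.f0 s (Prog.emit s) (Prog.emit s) s) ⟨rfl, rfl⟩
    rcases hχ' with rfl | rfl
    · exact (ih χ hχ).2 (EFormula.eq_nemits_of_contradicts_emits hcon)
    · exact not_nemits_emit _ s (EFormula.eq_nemits_of_contradicts_emits hcon ▸ hK χ hχ)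

end ESupProof

/-- In the Esterel TSS with context `c = P3`, neither the emission
predicate `P3 ⊨ s` nor its negation `¬(P3 ⊨ s)` has a supported proof; hence `P3` is not
constructive. -/
theorem P3_not_constructive {S : Type} (s : S) :
    ¬ ESupProof (P3 s) (EFormula.emits (P3 s) s) ∧
    ¬ ESupProof (P3 s) (EFormula.nemits (P3 s) s) :=
  ⟨fun h => (h.ne_emits_P3_and_ne_nemits_P3 s).1 rfl,
    fun h => (h.ne_emits_P3_and_ne_nemits_P3 s).2 rfl⟩
end

section
/- Let P5 be the Esterel program (present s0 then emit s1 else 0) ; emit s0 with context c = P5. In the Esterel TSS, neither the emission predicate P5 ⊨_{P5} s0 nor its negation ¬(P5 ⊨_{P5} s0) has a supported proof; hence P5 is not constructive. -/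
/-- The program `P5 = (present s0 then emit s1 else 0) ; emit s0`. -/
def P5 {S : Type} (s0 s1 : S) : Prog S :=
  Prog.seq (Prog.present s0 (Prog.emit s1) Prog.nil) (Prog.emit s0)

/-! Supported proofs are well founded, so no member of a set `B` of formulae has one as soon as
every rule instance concluding a member of `B` has a premise in `B`, and every negative member
of `B` is contradicted by a rule instance whose premises can only be contradicted from within
`B`. For `P5` such a set exists: `P5 ⊨ s0` needs the test `present s0 …` to emit `s0`,
terminate or move, each of which needs `P5 ⊨ s0` or its negation, while `¬(P5 ⊨ s0)` needs the
test not to terminate, which again needs `P5 ⊨ s0`. -/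

namespace EFormula

variable {S : Type}

theorem contradicts_emits_iff {χ : EFormula S} {p : Prog S} {x : S} :
    χ.contradicts (emits p x) ↔ χ = nemits p x := by
  cases χ <;> simp [contradicts, eq_comm]

theorem contradicts_nemits_iff {χ : EFormula S} {p : Prog S} {x : S} :
    χ.contradicts (nemits p x) ↔ χ = emits p x := by
  cases χ <;> simp [contradicts, eq_comm]

theorem contradicts_term_iff {χ : EFormula S} {p : Prog S} :
    χ.contradicts (term p) ↔ χ = nterm p := by
  cases χ <;> simp [contradicts, eq_comm]

end EFormula

section Blocked

variable {S : Type}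

def EBlocked (c : Prog S) (B : EFormula S → Prop) : Prop :=
  (∀ φ, B φ → ∀ K, EsterelRule c K φ → ∃ ψ ∈ K, B ψ) ∧
  (∀ φ, B φ → ¬ φ.isPos → ∃ K' ψ', EsterelRule c K' ψ' ∧ ψ'.contradicts φ ∧
    ∀ χ' ∈ K', ∀ χ, χ.contradicts χ' → B χ)

theorem EBlocked.not_supProof {c : Prog S} {B : EFormula S → Prop} (hB : EBlocked c B)
    {φ : EFormula S} (hφ : B φ) : ¬ ESupProof c φ := by
  intro h
  induction h with
  | pos K φ hrule _ ih =>
    obtain ⟨ψ, hψK, hψ⟩ := hB.1 φ hφ K hrule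
    exact ih ψ hψK hψ
  | neg φ hneg K _ hrules ih =>
    obtain ⟨K', ψ', hrule, hcon, hK'⟩ := hB.2 φ hφ hneg
    obtain ⟨χ, hχK, χ', hχ'K', hχχ'⟩ := hrules K' ψ' hrule hcon
    exact ih χ hχK (hK' χ' hχ'K' χ hχχ')

end Blocked

section P5

variable {S : Type}

abbrev P5Test (s0 s1 : S) : Prog S := Prog.present s0 (Prog.emit s1) Prog.nil

inductive P5Blocked (s0 s1 : S) : EFormula S → Prop
  | emits : P5Blocked s0 s1 (.emits (P5 s0 s1) s0)
  | nemits : P5Blocked s0 s1 (.nemits (P5 s0 s1) s0)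
  | test_emits : P5Blocked s0 s1 (.emits (P5Test s0 s1) s0)
  | test_term : P5Blocked s0 s1 (.term (P5Test s0 s1))
  | test_nterm : P5Blocked s0 s1 (.nterm (P5Test s0 s1))
  | test_trans (x : S) (p' : Prog S) : P5Blocked s0 s1 (.trans (P5Test s0 s1) x p')
  | emit_nemits : P5Blocked s0 s1 (.nemits (.emit s0) s0)
  | nil_nterm : P5Blocked s0 s1 (.nterm .nil)

theorem P5Blocked.exists_premise {s0 s1 : S} {φ : EFormula S} (hφ : P5Blocked s0 s1 φ)
    {K : Set (EFormula S)} (hrule : EsterelRule (P5 s0 s1) K φ) :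
    ∃ ψ ∈ K, P5Blocked s0 s1 ψ := by
  cases hφ <;> unfold P5 at hrule <;> cases hrule
  case emits.s0 => exact ⟨_, rfl, .test_emits⟩
  case emits.s1 => exact ⟨_, .inl rfl, .test_term⟩
  case emits.s2 p' x' => exact ⟨_, .inl rfl, .test_trans x' p'⟩
  -- the remaining rules are those of the test, whose first premise is `P5 ⊨ s0` or its negation
  all_goals first
    | exact ⟨_, .inl rfl, .emits⟩
    | exact ⟨_, .inl rfl, .nemits⟩

theorem P5Blocked.exists_refutation {s0 s1 : S} {φ : EFormula S} (hφ : P5Blocked s0 s1 φ)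
    (hneg : ¬ φ.isPos) :
    ∃ K' ψ', EsterelRule (P5 s0 s1) K' ψ' ∧ ψ'.contradicts φ ∧
      ∀ χ' ∈ K', ∀ χ, χ.contradicts χ' → P5Blocked s0 s1 χ := by
  cases hφ
  case nemits =>
    refine ⟨_, _, .s1 (P5Test s0 s1) (.emit s0) s0, ⟨rfl, rfl⟩, ?_⟩
    rintro χ' (rfl | rfl) χ hχ
    · rw [EFormula.contradicts_term_iff.1 hχ]; exact .test_nterm
    · rw [EFormula.contradicts_emits_iff.1 hχ]; exact .emit_nemits
  case test_nterm =>
    refine ⟨_, _, .if5 s0 (.emit s1) .nil, rfl, ?_⟩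
    rintro χ' (rfl | rfl) χ hχ
    · rw [EFormula.contradicts_nemits_iff.1 hχ]; exact .emits
    · rw [EFormula.contradicts_term_iff.1 hχ]; exact .nil_nterm
  case emit_nemits => exact ⟨∅, _, .e0 s0, ⟨rfl, rfl⟩, by simp⟩
  case nil_nterm => exact ⟨∅, _, .nil, rfl, by simp⟩
  all_goals exact absurd trivial hneg

theorem p5Blocked_eBlocked (s0 s1 : S) : EBlocked (P5 s0 s1) (P5Blocked s0 s1) :=
  ⟨fun _ hφ _ => hφ.exists_premise, fun _ hφ => hφ.exists_refutation⟩

end P5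

theorem P5_not_constructive_general {S : Type} (s0 s1 : S) :
    ¬ ESupProof (P5 s0 s1) (EFormula.emits (P5 s0 s1) s0) ∧
    ¬ ESupProof (P5 s0 s1) (EFormula.nemits (P5 s0 s1) s0) :=
  ⟨(p5Blocked_eBlocked s0 s1).not_supProof .emits,
    (p5Blocked_eBlocked s0 s1).not_supProof .nemits⟩

/-- In the Esterel TSS with context `c = P5`, neither the emission
predicate `P5 ⊨ s0` nor its negation `¬(P5 ⊨ s0)` has a supported proof; hence `P5` is not
constructive. -/
theorem P5_not_constructive {S : Type} (s0 s1 : S) (hs : s0 ≠ s1) :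
    ¬ ESupProof (P5 s0 s1) (EFormula.emits (P5 s0 s1) s0) ∧
    ¬ ESupProof (P5 s0 s1) (EFormula.nemits (P5 s0 s1) s0) :=
  P5_not_constructive_general s0 s1
end
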